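/- arXiv:1711.07199 — 4 statements merged into one kernel-verified Lean document; each statement's English description precedes it below -/
import Mathlib

section
/- Let Y_1, …, Y_n ∈ R^d and β > 1. Define M_n(t) = (1/n) Σ_{j=1}^n exp(t·Y_j) and m(t) = exp(‖t‖²/2). Then n ∫_{R^d} (M_n(t) - m(t))² exp(-β‖t‖²) dt = π^{d/2} [ (1/n) Σ_{i,j=1}^n β^{-d/2} exp(‖Y_i+Y_j‖²/(4β)) + n (β-1)^{-d/2} - 2 Σ_{j=1}^n (β - 1/2)^{-d/2} exp(‖Y_j‖²/(4β-2)) ]. -/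
/-!
Expanding the square, the integrand is a linear combination of shifted Gaussians
`exp (-b ‖t‖² + ⟪w, t⟫)` with `b ∈ {β, β - 1/2, β - 1}`, all with `b > 0` because `β > 1`.
Completing the square, each of them integrates to `(π / b) ^ (d / 2) * exp (‖w‖² / (4 b))`.
-/

open MeasureTheory Real
open scoped RealInnerProductSpace

section InnerProductSpace

variable {V : Type*} [NormedAddCommGroup V] [InnerProductSpace ℝ V]

theorem sq_mul_exp_neg_mul_sq_norm_expand {ι : Type*} [Fintype ι] (c β : ℝ) (Y : ι → V)
    (t : V) :
    (c * ∑ j, rexp ⟪t, Y j⟫ - rexp (‖t‖ ^ 2 / 2)) ^ 2 * rexp (-β * ‖t‖ ^ 2)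
      = c ^ 2 * ∑ i, ∑ j, rexp (-β * ‖t‖ ^ 2 + ⟪Y i + Y j, t⟫)
        - 2 * c * ∑ j, rexp (-(β - 1 / 2) * ‖t‖ ^ 2 + ⟪Y j, t⟫)
        + rexp (-(β - 1) * ‖t‖ ^ 2) := by
  have h₂ (u w : V) : rexp (-β * ‖t‖ ^ 2 + ⟪u + w, t⟫)
      = rexp (-β * ‖t‖ ^ 2) * (rexp ⟪t, u⟫ * rexp ⟪t, w⟫) := by
    rw [inner_add_left, real_inner_comm u, real_inner_comm w, ← exp_add, ← exp_add]
  have h₁ (u : V) : rexp (-(β - 1 / 2) * ‖t‖ ^ 2 + ⟪u, t⟫)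
      = rexp (-β * ‖t‖ ^ 2) * rexp (‖t‖ ^ 2 / 2) * rexp ⟪t, u⟫ := by
    rw [real_inner_comm u, ← exp_add, ← exp_add]
    ring_nf
  have h₀ : rexp (-(β - 1) * ‖t‖ ^ 2) = rexp (-β * ‖t‖ ^ 2) * rexp (‖t‖ ^ 2 / 2) ^ 2 := by
    rw [← exp_nat_mul, ← exp_add]
    ring_nf
  simp only [h₂, h₁, h₀, ← Finset.mul_sum, ← Finset.sum_mul]
  ring

variable [FiniteDimensional ℝ V] [MeasurableSpace V] [BorelSpace V]

theorem integrable_rexp_neg_mul_sq_norm_add_inner {b : ℝ} (hb : 0 < b) (w : V) :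
    Integrable fun v : V => rexp (-b * ‖v‖ ^ 2 + ⟪w, v⟫) := by
  refine (GaussianFourier.integrable_cexp_neg_mul_sq_norm_add (b := b) hb 1 w).re.congr ?_
  filter_upwards with v
  rw [← Complex.exp_ofReal_re]
  simp

theorem integral_rexp_neg_mul_sq_norm_add_inner {b : ℝ} (hb : 0 < b) (w : V) :
    ∫ v : V, rexp (-b * ‖v‖ ^ 2 + ⟪w, v⟫)
      = (π / b) ^ (Module.finrank ℝ V / 2 : ℝ) * rexp (‖w‖ ^ 2 / (4 * b)) := by
  have h := GaussianFourier.integral_cexp_neg_mul_sq_norm_add (V := V) (b := b) hb 1 w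
  rw [← Complex.ofReal_inj, ← integral_complex_ofReal]
  push_cast
  simpa [Complex.ofReal_cpow (div_pos pi_pos hb).le] using h

theorem integral_sq_mul_exp_neg_mul_sq_norm {ι : Type*} [Fintype ι] (c : ℝ) {β : ℝ}
    (hβ : 1 < β) (Y : ι → V) :
    ∫ t : V, (c * ∑ j, rexp ⟪t, Y j⟫ - rexp (‖t‖ ^ 2 / 2)) ^ 2 * rexp (-β * ‖t‖ ^ 2)
      = c ^ 2 * ∑ i, ∑ j,
            (π / β) ^ (Module.finrank ℝ V / 2 : ℝ) * rexp (‖Y i + Y j‖ ^ 2 / (4 * β))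
        - 2 * c * ∑ j, (π / (β - 1 / 2)) ^ (Module.finrank ℝ V / 2 : ℝ)
            * rexp (‖Y j‖ ^ 2 / (4 * (β - 1 / 2)))
        + (π / (β - 1)) ^ (Module.finrank ℝ V / 2 : ℝ) := by
  have hβ₀ : 0 < β := by linarith
  have hβ₁ : 0 < β - 1 / 2 := by linarith
  have hβ₂ : 0 < β - 1 := by linarith
  have I₀ (w : V) := integrable_rexp_neg_mul_sq_norm_add_inner hβ₀ w
  have I₁ (w : V) := integrable_rexp_neg_mul_sq_norm_add_inner hβ₁ w
  have I₂ : Integrable fun v : V => rexp (-(β - 1) * ‖v‖ ^ 2) := by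
    simpa using integrable_rexp_neg_mul_sq_norm_add_inner hβ₂ (0 : V)
  simp_rw [sq_mul_exp_neg_mul_sq_norm_expand]
  rw [integral_add, integral_sub, integral_const_mul, integral_const_mul, integral_finsetSum,
    integral_finsetSum, GaussianFourier.integral_rexp_neg_mul_sq_norm hβ₂]
  · simp only [integral_finsetSum _ fun j _ => I₀ _, integral_rexp_neg_mul_sq_norm_add_inner hβ₀,
      integral_rexp_neg_mul_sq_norm_add_inner hβ₁]
  all_goals fun_prop

end InnerProductSpace

theorem Tnbeta_closed_form (d n : ℕ) (hn : 0 < n) (Y : Fin n → EuclideanSpace ℝ (Fin d))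
    (β : ℝ) (hβ : 1 < β) :
    (n : ℝ) * ∫ t : EuclideanSpace ℝ (Fin d),
        ((1 / (n : ℝ)) * ∑ j, Real.exp ⟪t, Y j⟫ - Real.exp (‖t‖ ^ 2 / 2)) ^ 2
          * Real.exp (-β * ‖t‖ ^ 2)
      = Real.pi ^ ((d : ℝ) / 2) *
          ((1 / (n : ℝ)) * ∑ i, ∑ j,
              (1 / β ^ ((d : ℝ) / 2)) * Real.exp (‖Y i + Y j‖ ^ 2 / (4 * β))
            + (n : ℝ) / (β - 1) ^ ((d : ℝ) / 2)
            - 2 * ∑ j, (1 / (β - 1 / 2) ^ ((d : ℝ) / 2))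
                * Real.exp (‖Y j‖ ^ 2 / (4 * β - 2))) := by
  have hn₀ : (n : ℝ) ≠ 0 := by positivity
  have factor_pi {a : ℝ} (ha : 0 < a) (x : ℝ) :
      (π / a) ^ ((d : ℝ) / 2) * x = π ^ ((d : ℝ) / 2) * (1 / a ^ ((d : ℝ) / 2) * x) := by
    rw [div_rpow pi_pos.le ha.le]; ring
  rw [integral_sq_mul_exp_neg_mul_sq_norm _ hβ, finrank_euclideanSpace_fin,
    show 4 * (β - 1 / 2) = 4 * β - 2 by ring, ← mul_one ((π / (β - 1)) ^ _)]
  simp only [factor_pi (by linarith : 0 < β), factor_pi (by linarith : 0 < β - 1 / 2),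
    factor_pi (by linarith : 0 < β - 1), ← Finset.mul_sum]
  field_simp
  ring
end

section
/- Let Y_1, …, Y_n ∈ R^d satisfy Σ_j Y_j = 0 and Σ_j Y_j Y_jᵀ = n·I_d. Then Σ_{j,k=1}^n ‖Y_j + Y_k‖⁴ (Y_jᵀY_k) = 8n² b_{2,d} + 4n² b_{1,d} + 2n² b̃_{1,d}, where b_{2,d} = n^{-1} Σ_j ‖Y_j‖⁴, b_{1,d} = n^{-2} Σ_{j,k} (Y_jᵀY_k)³, and b̃_{1,d} = n^{-2} Σ_{j,k} (Y_jᵀY_k)‖Y_j‖²‖Y_k‖². -/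
/-!
Expand `‖Y j + Y k‖ ^ 4 = (‖Y j‖ ^ 2 + 2 ⟪Y j, Y k⟫ + ‖Y k‖ ^ 2) ^ 2`. After multiplying by
`⟪Y j, Y k⟫` and summing, the terms linear in `⟪Y j, Y k⟫` vanish because the `Y j` are centred,
and the terms `‖Y j‖ ^ 2 ⟪Y j, Y k⟫ ^ 2` give `n ∑ j, ‖Y j‖ ^ 4`, since the identity covariance
makes `∑ k, ⟪Y k, x⟫ ^ 2 = n ‖x‖ ^ 2` for every `x`.
-/

open scoped RealInnerProductSpace BigOperators

open Finset

section TightFrame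

variable {ι E : Type*} [Fintype ι] [NormedAddCommGroup E] [InnerProductSpace ℝ E]

theorem norm_add_pow_four_mul_inner (a b : E) :
    ‖a + b‖ ^ 4 * ⟪a, b⟫ = ‖a‖ ^ 4 * ⟪a, b⟫ + ‖b‖ ^ 4 * ⟪b, a⟫ + 4 * ⟪a, b⟫ ^ 3
      + 2 * (⟪a, b⟫ * ‖a‖ ^ 2 * ‖b‖ ^ 2) + 4 * (‖a‖ ^ 2 * ⟪a, b⟫ ^ 2)
      + 4 * (‖b‖ ^ 2 * ⟪b, a⟫ ^ 2) := by
  rw [real_inner_comm a b, show ‖a + b‖ ^ 4 = (‖a + b‖ ^ 2) ^ 2 by ring, norm_add_sq_real]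
  ring

theorem sum_sum_swap_add (f : ι → ι → ℝ) :
    ∑ j, ∑ k, (f j k + f k j) = 2 * ∑ j, ∑ k, f j k := by
  simp only [sum_add_distrib, two_mul]
  rw [sum_comm (f := fun j k => f k j)]

theorem sum_sum_norm_add_pow_four_mul_inner (Y : ι → E) (c : ℝ) (hmean : ∑ j, Y j = 0)
    (htight : ∀ x, ∑ j, ⟪Y j, x⟫ ^ 2 = c * ‖x‖ ^ 2) :
    ∑ j, ∑ k, ‖Y j + Y k‖ ^ 4 * ⟪Y j, Y k⟫
      = 8 * c * ∑ j, ‖Y j‖ ^ 4 + 4 * ∑ j, ∑ k, ⟪Y j, Y k⟫ ^ 3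
        + 2 * ∑ j, ∑ k, ⟪Y j, Y k⟫ * ‖Y j‖ ^ 2 * ‖Y k‖ ^ 2 := by
  have hcross (j : ι) : ∑ k, ⟪Y j, Y k⟫ = 0 := by rw [← inner_sum, hmean, inner_zero_right]
  have hquad (j : ι) : ∑ k, ⟪Y j, Y k⟫ ^ 2 = c * ‖Y j‖ ^ 2 := by
    simpa only [real_inner_comm] using htight (Y j)
  have hsymm : ∑ j, ∑ k, ‖Y j + Y k‖ ^ 4 * ⟪Y j, Y k⟫ = 2 * ∑ j, ∑ k,
      (‖Y j‖ ^ 4 * ⟪Y j, Y k⟫ + 2 * ⟪Y j, Y k⟫ ^ 3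
        + ⟪Y j, Y k⟫ * ‖Y j‖ ^ 2 * ‖Y k‖ ^ 2 + 4 * (‖Y j‖ ^ 2 * ⟪Y j, Y k⟫ ^ 2)) := by
    rw [← sum_sum_swap_add]
    refine sum_congr rfl fun j _ => sum_congr rfl fun k _ => ?_
    rw [norm_add_pow_four_mul_inner, real_inner_comm (Y j) (Y k)]
    ring
  have hfourth : ∑ j, ‖Y j‖ ^ 2 * (c * ‖Y j‖ ^ 2) = c * ∑ j, ‖Y j‖ ^ 4 := by
    rw [mul_sum]
    exact sum_congr rfl fun j _ => by ring
  simp only [hsymm, sum_add_distrib, ← mul_sum, hcross, hquad, mul_zero, sum_const_zero, hfourth]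
  ring

end TightFrame

theorem EuclideanSpace.sum_inner_sq_of_sum_mul_eq_ite {ι κ : Type*} [Fintype ι] [Fintype κ]
    [DecidableEq κ] (Y : ι → EuclideanSpace ℝ κ) (c : ℝ)
    (hcov : ∀ a b, ∑ j, Y j a * Y j b = if a = b then c else 0) (x : EuclideanSpace ℝ κ) :
    ∑ j, ⟪Y j, x⟫ ^ 2 = c * ‖x‖ ^ 2 := by
  calc ∑ j, ⟪Y j, x⟫ ^ 2 = ∑ j, ∑ a, ∑ b, x a * x b * (Y j a * Y j b) := by
        refine sum_congr rfl fun j _ => ?_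
        simp only [PiLp.inner_apply, RCLike.inner_apply, conj_trivial, sq, sum_mul_sum]
        exact sum_congr rfl fun a _ => sum_congr rfl fun b _ => by ring
    _ = ∑ a, ∑ b, x a * x b * ∑ j, Y j a * Y j b := by
        simp only [mul_sum]
        rw [sum_comm]
        exact sum_congr rfl fun a _ => sum_comm
    _ = c * ‖x‖ ^ 2 := by
        simp only [hcov, mul_ite, mul_zero, sum_ite_eq, mem_univ, if_true]
        rw [EuclideanSpace.real_norm_sq_eq, mul_sum]
        exact sum_congr rfl fun a _ => by ring

theorem standardized_fourth_power_inner_sum (d n : ℕ) (hn : 0 < n)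
    (Y : Fin n → EuclideanSpace ℝ (Fin d))
    (hmean : ∑ j, Y j = 0)
    (hcov : ∀ k l : Fin d, ∑ j, Y j k * Y j l = if k = l then (n : ℝ) else 0) :
    ∑ j, ∑ k, ‖Y j + Y k‖ ^ 4 * ⟪Y j, Y k⟫
      = 8 * (n : ℝ) ^ 2 * ((1 / (n : ℝ)) * ∑ j, ‖Y j‖ ^ 4)
        + 4 * (n : ℝ) ^ 2 * ((1 / (n : ℝ) ^ 2) * ∑ j, ∑ k, ⟪Y j, Y k⟫ ^ 3)
        + 2 * (n : ℝ) ^ 2 *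
            ((1 / (n : ℝ) ^ 2) * ∑ j, ∑ k, ⟪Y j, Y k⟫ * ‖Y j‖ ^ 2 * ‖Y k‖ ^ 2) := by
  have hn' : (n : ℝ) ≠ 0 := by positivity
  rw [sum_sum_norm_add_pow_four_mul_inner Y n hmean
    (EuclideanSpace.sum_inner_sq_of_sum_mul_eq_ite Y n hcov)]
  field_simp
end

section
/- Let Y_1, …, Y_n ∈ R^d satisfy Σ_j Y_j = 0 and Σ_j Y_j Y_jᵀ = n·I_d. Then Σ_{j,k=1}^n ‖Y_j + Y_k‖⁶ = 2n Σ_{j=1}^n ‖Y_j‖⁶ + 6(d+4)n² b_{2,d} + 8n² b_{1,d} + 12n² b̃_{1,d}, with b_{1,d}, b̃_{1,d}, b_{2,d} as the Mardia skewness, Móri–Rohatgi–Székely skewness, and Mardia kurtosis respectively. -/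
/-! With `a j = ‖Y j‖²` and `t j k = ⟪Y j, Y k⟫`, `‖Y j + Y k‖⁶ = (a j + a k + 2 t j k)³`.
Expanding the cube, the terms linear in `t` vanish since `∑ k, t j k = ⟪Y j, ∑ k, Y k⟫ = 0`,
the terms quadratic in `t` collapse since `∑ k, t j k ^ 2 = n a j` (identity covariance), and the
pure `a`-terms produce `(∑ j, a j) (∑ j, a j ^ 2)` with `∑ j, a j = n d` (trace of the covariance). -/

open scoped RealInnerProductSpace BigOperators

open Finset

theorem Finset.sum_sum_add_pow_three {ι R : Type*} [Fintype ι] [CommSemiring R] (a : ι → R) :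
    ∑ j, ∑ k, (a j + a k) ^ 3
      = 2 * Fintype.card ι * ∑ j, a j ^ 3 + 6 * (∑ j, a j) * ∑ j, a j ^ 2 := by
  have hcube : ∀ j k, (a j + a k) ^ 3
      = a j ^ 3 + a k ^ 3 + 3 * (a j * a k ^ 2) + 3 * (a k * a j ^ 2) := by
    intro j k; ring
  simp only [hcube, sum_add_distrib, ← mul_sum, sum_const, card_univ, nsmul_eq_mul]
  rw [sum_comm (f := fun j k => a k * a j ^ 2)]
  simp only [← mul_sum, ← sum_mul]
  ring

theorem Finset.sum_sum_add_mul_of_symm {ι R : Type*} [Fintype ι] [CommSemiring R]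
    (f : ι → R) {g : ι → ι → R} (hg : ∀ j k, g k j = g j k) :
    ∑ j, ∑ k, (f j + f k) * g j k = 2 * ∑ j, f j * ∑ k, g j k := by
  have hswap : ∑ j, ∑ k, f k * g j k = ∑ j, ∑ k, f j * g j k := by
    rw [sum_comm]; simp only [hg]
  simp only [add_mul, sum_add_distrib, hswap, mul_sum, two_mul]

section

variable {ι E : Type*} [Fintype ι] [NormedAddCommGroup E] [InnerProductSpace ℝ E]

theorem sum_sum_add_mul_inner_eq_zero {Y : ι → E} (hmean : ∑ j, Y j = 0) (f : ι → ℝ) :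
    ∑ j, ∑ k, (f j + f k) * ⟪Y j, Y k⟫ = 0 := by
  rw [sum_sum_add_mul_of_symm f fun j k => real_inner_comm (Y j) (Y k)]
  simp [← inner_sum, hmean]

theorem sum_sum_add_mul_inner_sq {Y : ι → E} {c : ℝ}
    (hiso : ∀ x, ∑ j, ⟪x, Y j⟫ ^ 2 = c * ‖x‖ ^ 2) (f : ι → ℝ) :
    ∑ j, ∑ k, (f j + f k) * ⟪Y j, Y k⟫ ^ 2 = 2 * c * ∑ j, f j * ‖Y j‖ ^ 2 := by
  rw [sum_sum_add_mul_of_symm f fun j k => by rw [real_inner_comm]]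
  simp only [hiso, mul_left_comm _ c, ← mul_sum]
  ring

theorem sum_norm_sq_eq_mul_finrank [FiniteDimensional ℝ E] {Y : ι → E} {c : ℝ}
    (hiso : ∀ x, ∑ j, ⟪x, Y j⟫ ^ 2 = c * ‖x‖ ^ 2) :
    ∑ j, ‖Y j‖ ^ 2 = c * Module.finrank ℝ E := by
  let b := stdOrthonormalBasis ℝ E
  calc ∑ j, ‖Y j‖ ^ 2 = ∑ i, ∑ j, ⟪b i, Y j⟫ ^ 2 := by
        simp only [← b.sum_sq_inner_right]; exact sum_comm
    _ = c * Module.finrank ℝ E := by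
        simp [hiso, b.orthonormal.1, mul_comm]

theorem norm_add_pow_six (x y : E) :
    ‖x + y‖ ^ 6 = (‖x‖ ^ 2 + ‖y‖ ^ 2) ^ 3 + 6 * ((‖x‖ ^ 4 + ‖y‖ ^ 4) * ⟪x, y⟫)
      + 12 * (⟪x, y⟫ * ‖x‖ ^ 2 * ‖y‖ ^ 2) + 12 * ((‖x‖ ^ 2 + ‖y‖ ^ 2) * ⟪x, y⟫ ^ 2)
      + 8 * ⟪x, y⟫ ^ 3 := by
  rw [show ‖x + y‖ ^ 6 = (‖x + y‖ ^ 2) ^ 3 by ring, norm_add_sq_real]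
  ring

theorem sum_sum_norm_add_pow_six {Y : ι → E} {c : ℝ} (hmean : ∑ j, Y j = 0)
    (hiso : ∀ x, ∑ j, ⟪x, Y j⟫ ^ 2 = c * ‖x‖ ^ 2) :
    ∑ j, ∑ k, ‖Y j + Y k‖ ^ 6
      = 2 * Fintype.card ι * ∑ j, ‖Y j‖ ^ 6 + 6 * (∑ j, ‖Y j‖ ^ 2) * ∑ j, ‖Y j‖ ^ 4
        + 24 * c * ∑ j, ‖Y j‖ ^ 4 + 8 * ∑ j, ∑ k, ⟪Y j, Y k⟫ ^ 3
        + 12 * ∑ j, ∑ k, ⟪Y j, Y k⟫ * ‖Y j‖ ^ 2 * ‖Y k‖ ^ 2 := by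
  simp only [norm_add_pow_six, sum_add_distrib, ← mul_sum, sum_sum_add_pow_three,
    sum_sum_add_mul_inner_eq_zero hmean, sum_sum_add_mul_inner_sq hiso, ← pow_mul, ← pow_add]
  ring

theorem sum_inner_sq_eq_of_sum_mul_eq_ite {m : Type*} [Fintype m] [DecidableEq m]
    {Y : ι → EuclideanSpace ℝ m} {c : ℝ}
    (hcov : ∀ k l : m, ∑ j, Y j k * Y j l = if k = l then c else 0)
    (x : EuclideanSpace ℝ m) : ∑ j, ⟪x, Y j⟫ ^ 2 = c * ‖x‖ ^ 2 := by
  have hinner : ∀ j, ⟪x, Y j⟫ = ∑ k, x k * Y j k := fun j => by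
    simp [PiLp.inner_apply, mul_comm]
  calc ∑ j, ⟪x, Y j⟫ ^ 2 = ∑ j, ∑ k, ∑ l, x k * x l * (Y j k * Y j l) := by
        simp_rw [hinner, sq, sum_mul_sum, mul_mul_mul_comm]
    _ = ∑ k, ∑ l, x k * x l * ∑ j, Y j k * Y j l := by
        simp_rw [mul_sum]; rw [sum_comm]; exact sum_congr rfl fun k _ => sum_comm
    _ = c * ‖x‖ ^ 2 := by
        rw [EuclideanSpace.real_norm_sq_eq, mul_sum]
        simp [hcov, sq, mul_comm]

end

theorem standardized_sixth_power_sum (d n : ℕ) (hn : 0 < n)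
    (Y : Fin n → EuclideanSpace ℝ (Fin d))
    (hmean : ∑ j, Y j = 0)
    (hcov : ∀ k l : Fin d, ∑ j, Y j k * Y j l = if k = l then (n : ℝ) else 0) :
    ∑ j, ∑ k, ‖Y j + Y k‖ ^ 6
      = 2 * (n : ℝ) * ∑ j, ‖Y j‖ ^ 6
        + 6 * ((d : ℝ) + 4) * (n : ℝ) ^ 2 * ((1 / (n : ℝ)) * ∑ j, ‖Y j‖ ^ 4)
        + 8 * (n : ℝ) ^ 2 * ((1 / (n : ℝ) ^ 2) * ∑ j, ∑ k, ⟪Y j, Y k⟫ ^ 3)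
        + 12 * (n : ℝ) ^ 2 *
            ((1 / (n : ℝ) ^ 2) * ∑ j, ∑ k, ⟪Y j, Y k⟫ * ‖Y j‖ ^ 2 * ‖Y k‖ ^ 2) := by
  have hiso := sum_inner_sq_eq_of_sum_mul_eq_ite hcov
  have htrace : ∑ j, ‖Y j‖ ^ 2 = n * d := by simpa using sum_norm_sq_eq_mul_finrank hiso
  have hn' : (n : ℝ) ≠ 0 := by positivity
  rw [sum_sum_norm_add_pow_six hmean hiso, htrace, Fintype.card_fin]
  field_simp
  ring
end

section
/- For β > 2 and d ≥ 1, ∫_{R^d} C(t,t) exp(-β‖t‖²) dt = π^{d/2} [ (β-2)^{-d/2} - (β-1)^{-d/2} - (d/2)(β-1)^{-d/2-1} - (d(d+2)/8)(β-1)^{-d/2-2} ], where C(s,t) = exp((‖s‖²+‖t‖²)/2)(e^{s·t} - 1 - s·t - (s·t)²/2). -/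
/-!
On the diagonal, `C t t · exp (-β‖t‖²)` is `e^{-(β-2)r} - e^{-(β-1)r} - r e^{-(β-1)r} - r²/2 e^{-(β-1)r}`
with `r = ‖t‖²`, so the integral is a combination of Gaussian moments `∫ ‖x‖ᵏ e^{-b‖x‖²}`.
These are computed in polar coordinates: the radial integral is a Gamma integral, and the
surface factor `d · vol(B) = 2π^{d/2} / Γ(d/2)` turns the moments into
`π^{d/2} Γ((d+k)/2) / Γ(d/2) · b^{-(d+k)/2}`.
-/

open MeasureTheory Real
open scoped RealInnerProductSpace
open Module Set

theorem integrableOn_Ioi_pow_mul_exp_neg_mul_sq {b : ℝ} (hb : 0 < b) (n : ℕ) :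
    IntegrableOn (fun y : ℝ ↦ y ^ n * exp (-b * y ^ 2)) (Ioi 0) := by
  simpa [rpow_natCast] using
    integrableOn_rpow_mul_exp_neg_mul_sq hb (s := n) (neg_one_lt_zero.trans_le n.cast_nonneg)

theorem integral_Ioi_pow_mul_exp_neg_mul_sq {b : ℝ} (hb : 0 < b) (n : ℕ) :
    ∫ y in Ioi (0 : ℝ), y ^ n * exp (-b * y ^ 2) =
      b ^ (-(n + 1) / 2 : ℝ) * (1 / 2) * Gamma ((n + 1) / 2) := by
  simpa [rpow_natCast] using integral_rpow_mul_exp_neg_mul_rpow (p := 2) (q := n) two_pos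
    (neg_one_lt_zero.trans_le n.cast_nonneg) hb

theorem sqrt_pi_pow (n : ℕ) : √π ^ n = π ^ (n / 2 : ℝ) := by
  rw [sqrt_eq_rpow, ← rpow_natCast, ← rpow_mul pi_pos.le, one_div_mul_eq_div]

section GaussianMoments

variable {V : Type*} [NormedAddCommGroup V] [InnerProductSpace ℝ V] [FiniteDimensional ℝ V]
  [MeasurableSpace V] [BorelSpace V] [Nontrivial V]

theorem integrable_norm_pow_mul_exp_neg_mul_sq_norm {b : ℝ} (hb : 0 < b) (k : ℕ) :
    Integrable (fun x : V ↦ ‖x‖ ^ k * exp (-b * ‖x‖ ^ 2)) := by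
  rw [integrable_fun_norm_addHaar volume (f := fun y ↦ y ^ k * exp (-b * y ^ 2))]
  simpa only [smul_eq_mul, ← mul_assoc, ← pow_add] using
    integrableOn_Ioi_pow_mul_exp_neg_mul_sq hb (finrank ℝ V - 1 + k)

theorem integral_norm_pow_mul_exp_neg_mul_sq_norm {b : ℝ} (hb : 0 < b) (k : ℕ) :
    ∫ x : V, ‖x‖ ^ k * exp (-b * ‖x‖ ^ 2) =
      π ^ (finrank ℝ V / 2 : ℝ) * (Gamma ((finrank ℝ V + k) / 2) / Gamma (finrank ℝ V / 2)) *
        b ^ (-(finrank ℝ V + k) / 2 : ℝ) := by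
  have hd : 1 ≤ finrank ℝ V := finrank_pos
  rw [integral_fun_norm_addHaar volume (fun y ↦ y ^ k * exp (-b * y ^ 2)), measureReal_def,
    InnerProductSpace.volume_ball]
  simp only [smul_eq_mul, ← mul_assoc, ← pow_add, nsmul_eq_mul]
  generalize finrank ℝ V = d at hd ⊢
  have hΓ : Gamma (d / 2 + 1) = d / 2 * Gamma (d / 2) := Gamma_add_one (by positivity)
  have hΓ_pos : 0 < Gamma (d / 2) := Gamma_pos_of_pos (by positivity)
  have hexp : ((d - 1 + k : ℕ) : ℝ) + 1 = d + k := by push_cast [Nat.cast_sub hd]; ring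
  rw [integral_Ioi_pow_mul_exp_neg_mul_sq hb, ENNReal.ofReal_one, one_pow, one_mul,
    ENNReal.toReal_ofReal (by positivity), hexp, hΓ, sqrt_pi_pow]
  field_simp

end GaussianMoments

theorem exp_mul_sub_taylor_mul_exp (r β : ℝ) :
    exp r * (exp r - 1 - r - r ^ 2 / 2) * exp (-β * r) =
      exp (-(β - 2) * r) - exp (-(β - 1) * r) - r * exp (-(β - 1) * r)
        - 1 / 2 * (r ^ 2 * exp (-(β - 1) * r)) := by
  have h₂ : exp (-(β - 2) * r) = exp r * exp r * exp (-β * r) := by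
    rw [← exp_add, ← exp_add]; ring_nf
  have h₁ : exp (-(β - 1) * r) = exp r * exp (-β * r) := by
    rw [← exp_add]; ring_nf
  rw [h₁, h₂]; ring

theorem expectation_T_infty (d : ℕ) (hd : 1 ≤ d) (β : ℝ) (hβ : 2 < β)
    (C : EuclideanSpace ℝ (Fin d) → EuclideanSpace ℝ (Fin d) → ℝ)
    (hC : ∀ s t, C s t = Real.exp ((‖s‖ ^ 2 + ‖t‖ ^ 2) / 2) *
        (Real.exp ⟪s, t⟫ - 1 - ⟪s, t⟫ - ⟪s, t⟫ ^ 2 / 2)) :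
    ∫ t : EuclideanSpace ℝ (Fin d), C t t * Real.exp (-β * ‖t‖ ^ 2)
      = Real.pi ^ ((d : ℝ) / 2) *
          ((β - 2) ^ (-(d : ℝ) / 2) - (β - 1) ^ (-(d : ℝ) / 2)
            - (d / 2) * (β - 1) ^ (-(d : ℝ) / 2 - 1)
            - (d * (d + 2) / 8) * (β - 1) ^ (-(d : ℝ) / 2 - 2)) := by
  have : Nonempty (Fin d) := Fin.pos_iff_nonempty.mp hd
  have hb₂ : 0 < β - 2 := by linarith
  have hb₁ : 0 < β - 1 := by linarith
  have hdiag : ∀ t : EuclideanSpace ℝ (Fin d), C t t * exp (-β * ‖t‖ ^ 2) =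
      ‖t‖ ^ 0 * exp (-(β - 2) * ‖t‖ ^ 2) - ‖t‖ ^ 0 * exp (-(β - 1) * ‖t‖ ^ 2)
        - ‖t‖ ^ 2 * exp (-(β - 1) * ‖t‖ ^ 2) - 1 / 2 * (‖t‖ ^ 4 * exp (-(β - 1) * ‖t‖ ^ 2)) := by
    intro t
    rw [hC, real_inner_self_eq_norm_sq, add_self_div_two, exp_mul_sub_taylor_mul_exp, pow_zero,
      one_mul, one_mul, ← pow_mul]
  have hint (k : ℕ) {b : ℝ} (hb : 0 < b) :=
    integrable_norm_pow_mul_exp_neg_mul_sq_norm (V := EuclideanSpace ℝ (Fin d)) hb k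
  simp_rw [hdiag]
  rw [integral_sub (((hint 0 hb₂).sub' (hint 0 hb₁)).sub' (hint 2 hb₁)) ((hint 4 hb₁).const_mul _),
    integral_sub ((hint 0 hb₂).sub' (hint 0 hb₁)) (hint 2 hb₁),
    integral_sub (hint 0 hb₂) (hint 0 hb₁), integral_const_mul]
  simp only [integral_norm_pow_mul_exp_neg_mul_sq_norm hb₁,
    integral_norm_pow_mul_exp_neg_mul_sq_norm hb₂, finrank_euclideanSpace_fin]
  have hΓ_pos : 0 < Gamma (d / 2) := Gamma_pos_of_pos (by positivity)
  have hΓ₂ : Gamma ((d + 2) / 2) = d / 2 * Gamma (d / 2) := by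
    rw [show ((d : ℝ) + 2) / 2 = d / 2 + 1 by ring, Gamma_add_one (by positivity)]
  have hΓ₄ : Gamma ((d + 4) / 2) = (d + 2) / 2 * (d / 2 * Gamma (d / 2)) := by
    rw [show ((d : ℝ) + 4) / 2 = (d + 2) / 2 + 1 by ring, Gamma_add_one (by positivity), hΓ₂]
  push_cast
  rw [add_zero, hΓ₂, hΓ₄, show -((d : ℝ) + 2) / 2 = -d / 2 - 1 by ring,
    show -((d : ℝ) + 4) / 2 = -d / 2 - 2 by ring]
  field_simp
  ring
end
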